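/- For s and t in a neighborhood of 0 (real, with s, t > -1 and s + t > -1), ∫₀¹ |2 sin πθ|^s · |2 cos πθ|^t dθ = Γ(s+1)Γ(t+1) / (Γ(s/2+1)·Γ(t/2+1)·Γ((s+t)/2+1)). -/

import Mathlib

/-!
The integrand is symmetric under `θ ↦ 1 - θ`, so the integral is twice the integral over
`[0, 1/2]`, which after `x = π θ` is `2 ^ (s + t) / π` times
`∫₀^{π/2} sin ^ s x cos ^ t x dx`.
The substitution `u = sin² x` turns the latter into half the Beta integral
`B((s + 1) / 2, (t + 1) / 2)`, and Legendre's duplication formula rewrites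
`Γ((s + 1) / 2) = Γ(s + 1) 2 ^ (-s) √π / Γ(s / 2 + 1)`.
-/

open Real MeasureTheory Set

lemma ofReal_rpow_mul_one_sub_rpow {a b x : ℝ} (hx : x ∈ Icc (0 : ℝ) 1) :
    ((x ^ (a - 1) * (1 - x) ^ (b - 1) : ℝ) : ℂ)
      = (x : ℂ) ^ ((a : ℂ) - 1) * (1 - (x : ℂ)) ^ ((b : ℂ) - 1) := by
  push_cast [Complex.ofReal_cpow hx.1, Complex.ofReal_cpow (sub_nonneg.2 hx.2)]
  rfl

lemma integrableOn_rpow_mul_one_sub_rpow {a b : ℝ} (ha : 0 < a) (hb : 0 < b) :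
    IntegrableOn (fun x : ℝ => x ^ (a - 1) * (1 - x) ^ (b - 1)) (Ioo 0 1) := by
  have h := (Complex.betaIntegral_convergent (u := a) (v := b) (by simpa) (by simpa)).1
  refine IntegrableOn.congr_fun (h.mono_set Ioo_subset_Ioc_self).re (fun x hx => ?_)
    measurableSet_Ioo
  simp [← ofReal_rpow_mul_one_sub_rpow (Ioo_subset_Icc_self hx)]

lemma integral_rpow_mul_one_sub_rpow {a b : ℝ} (ha : 0 < a) (hb : 0 < b) :
    ∫ x in Ioo (0 : ℝ) 1, x ^ (a - 1) * (1 - x) ^ (b - 1)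
      = Gamma a * Gamma b / Gamma (a + b) := by
  have hbeta := Complex.betaIntegral_eq_Gamma_mul_div (u := a) (v := b) (by simpa) (by simpa)
  rw [Complex.betaIntegral, intervalIntegral.integral_of_le zero_le_one,
    integral_Ioc_eq_integral_Ioo] at hbeta
  rw [← Complex.ofReal_inj, ← integral_complex_ofReal,
    setIntegral_congr_fun measurableSet_Ioo
      (fun x hx => ofReal_rpow_mul_one_sub_rpow (Ioo_subset_Icc_self hx)), hbeta]
  push_cast [← Complex.Gamma_ofReal]
  rfl

lemma strictMonoOn_sin_sq : StrictMonoOn (fun x => sin x ^ 2) (Icc 0 (π / 2)) :=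
  fun x hx y hy hxy => pow_lt_pow_left₀
    (strictMonoOn_sin ⟨by linarith [pi_pos, hx.1], hx.2⟩
      ⟨by linarith [pi_pos, hy.1], hy.2⟩ hxy)
    (sin_nonneg_of_nonneg_of_le_pi hx.1 (by linarith [pi_pos, hx.2])) two_ne_zero

lemma injOn_sin_sq : InjOn (fun x => sin x ^ 2) (Ioo 0 (π / 2)) :=
  (strictMonoOn_sin_sq.mono Ioo_subset_Icc_self).injOn

lemma sin_sq_image_Ioo : (fun x => sin x ^ 2) '' Ioo 0 (π / 2) = Ioo 0 1 := by
  rw [ContinuousOn.image_Ioo_of_strictMonoOn (by positivity) (by fun_prop) strictMonoOn_sin_sq]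
  simp

lemma hasDerivAt_sin_sq (x : ℝ) : HasDerivAt (fun x => sin x ^ 2) (2 * sin x * cos x) x :=
  ((hasDerivAt_sin x).fun_pow 2).congr_deriv (by norm_num)

lemma mul_rpow_sq_eq_rpow {y : ℝ} (hy : 0 < y) (u : ℝ) :
    y * (y ^ 2) ^ ((u + 1) / 2 - 1) = y ^ u := by
  rw [← rpow_natCast, ← rpow_mul hy.le,
    show (2 : ℕ) * ((u + 1) / 2 - 1) = u - 1 by push_cast; ring, rpow_sub_one hy.ne']
  field_simp

lemma abs_two_sin_mul_cos_mul_beta_integrand (s t : ℝ) {x : ℝ} (hx : x ∈ Ioo 0 (π / 2)) :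
    |2 * sin x * cos x| * ((sin x ^ 2) ^ ((s + 1) / 2 - 1) * (1 - sin x ^ 2) ^ ((t + 1) / 2 - 1))
      = 2 * (sin x ^ s * cos x ^ t) := by
  have hsin : 0 < sin x := sin_pos_of_pos_of_lt_pi hx.1 (by linarith [hx.2, pi_pos])
  have hcos : 0 < cos x := cos_pos_of_mem_Ioo ⟨by linarith [hx.1, pi_pos], hx.2⟩
  rw [← cos_sq', abs_of_pos (by positivity), ← mul_rpow_sq_eq_rpow hsin,
    ← mul_rpow_sq_eq_rpow hcos]
  ring

lemma integrableOn_sin_rpow_mul_cos_rpow {s t : ℝ} (hs : -1 < s) (ht : -1 < t) :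
    IntegrableOn (fun x => sin x ^ s * cos x ^ t) (Ioo 0 (π / 2)) := by
  have h := (integrableOn_image_iff_integrableOn_abs_deriv_smul measurableSet_Ioo
    (fun x _ => (hasDerivAt_sin_sq x).hasDerivWithinAt) injOn_sin_sq _).1
    (sin_sq_image_Ioo ▸ integrableOn_rpow_mul_one_sub_rpow (a := (s + 1) / 2) (b := (t + 1) / 2)
      (by linarith) (by linarith))
  simp only [smul_eq_mul] at h
  rw [IntegrableOn, ← integrable_const_mul_iff (isUnit_iff_ne_zero.2 (two_ne_zero' ℝ))]
  exact h.congr_fun (fun x hx => abs_two_sin_mul_cos_mul_beta_integrand s t hx) measurableSet_Ioo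

lemma integral_sin_rpow_mul_cos_rpow {s t : ℝ} (hs : -1 < s) (ht : -1 < t) :
    ∫ x in Ioo 0 (π / 2), sin x ^ s * cos x ^ t
      = Gamma ((s + 1) / 2) * Gamma ((t + 1) / 2) / (2 * Gamma ((s + t) / 2 + 1)) := by
  have h := integral_image_eq_integral_abs_deriv_smul measurableSet_Ioo
    (fun x _ => (hasDerivAt_sin_sq x).hasDerivWithinAt) injOn_sin_sq
    (fun u => u ^ ((s + 1) / 2 - 1) * (1 - u) ^ ((t + 1) / 2 - 1))
  simp only [smul_eq_mul] at h
  rw [sin_sq_image_Ioo, integral_rpow_mul_one_sub_rpow (by linarith) (by linarith),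
    setIntegral_congr_fun measurableSet_Ioo
      (fun x hx => abs_two_sin_mul_cos_mul_beta_integrand s t hx), integral_const_mul,
    show (s + 1) / 2 + (t + 1) / 2 = (s + t) / 2 + 1 by ring] at h
  rw [mul_comm 2, ← div_div, h]
  ring

lemma integral_eq_two_smul_integral_half_of_symm {E : Type*} [NormedAddCommGroup E]
    [NormedSpace ℝ E] {f : ℝ → E} {c : ℝ} (hf : ∀ x, f (c - x) = f x)
    (hint : IntervalIntegrable f volume 0 (c / 2)) :
    ∫ x in 0..c, f x = (2 : ℝ) • ∫ x in 0..c / 2, f x := by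
  have hreflect : ∫ x in c / 2..c, f x = ∫ x in 0..c / 2, f x := by
    simpa [hf, sub_half] using
      (intervalIntegral.integral_comp_sub_left f c (a := 0) (b := c / 2)).symm
  have hint' : IntervalIntegrable f volume (c / 2) c := by
    simpa [hf, sub_half] using (hint.comp_sub_left c).symm
  rw [← intervalIntegral.integral_add_adjacent_intervals hint hint', hreflect, two_smul]

lemma abs_two_sin_rpow_mul_abs_two_cos_rpow (s t : ℝ) {x : ℝ} (hx : x ∈ Ioo 0 (π / 2)) :
    |2 * sin x| ^ s * |2 * cos x| ^ t = 2 ^ (s + t) * (sin x ^ s * cos x ^ t) := by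
  have hsin : 0 < sin x := sin_pos_of_pos_of_lt_pi hx.1 (by linarith [hx.2, pi_pos])
  have hcos : 0 < cos x := cos_pos_of_mem_Ioo ⟨by linarith [hx.1, pi_pos], hx.2⟩
  rw [abs_of_pos (by positivity), abs_of_pos (by positivity), mul_rpow zero_le_two hsin.le,
    mul_rpow zero_le_two hcos.le, rpow_add two_pos]
  ring

lemma integral_abs_two_sin_pi_mul_rpow_mul_abs_two_cos_pi_mul_rpow (s t : ℝ) :
    ∫ θ in 0..1 / 2, |2 * sin (π * θ)| ^ s * |2 * cos (π * θ)| ^ t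
      = 2 ^ (s + t) / π * ∫ x in Ioo 0 (π / 2), sin x ^ s * cos x ^ t := by
  rw [intervalIntegral.integral_comp_mul_left (fun x => |2 * sin x| ^ s * |2 * cos x| ^ t)
    pi_ne_zero, mul_zero, mul_one_div, intervalIntegral.integral_of_le (by positivity),
    integral_Ioc_eq_integral_Ioo, setIntegral_congr_fun measurableSet_Ioo
      (fun x hx => abs_two_sin_rpow_mul_abs_two_cos_rpow s t hx), integral_const_mul, smul_eq_mul]
  ring

lemma intervalIntegrable_abs_two_sin_pi_mul_rpow_mul_abs_two_cos_pi_mul_rpow {s t : ℝ}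
    (hs : -1 < s) (ht : -1 < t) :
    IntervalIntegrable (fun θ => |2 * sin (π * θ)| ^ s * |2 * cos (π * θ)| ^ t)
      volume 0 (1 / 2) := by
  have h : IntervalIntegrable (fun x => |2 * sin x| ^ s * |2 * cos x| ^ t) volume 0 (π / 2) := by
    rw [intervalIntegrable_iff_integrableOn_Ioo_of_le (by positivity)]
    exact IntegrableOn.congr_fun ((integrableOn_sin_rpow_mul_cos_rpow hs ht).const_mul _)
      (fun x hx => (abs_two_sin_rpow_mul_abs_two_cos_rpow s t hx).symm) measurableSet_Ioo
  simpa [div_div_cancel_left' pi_ne_zero] using h.comp_mul_left (c := π)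

lemma Gamma_add_one_div_two_mul_Gamma_div_two_add_one (u : ℝ) :
    Gamma ((u + 1) / 2) * Gamma (u / 2 + 1) = Gamma (u + 1) * (2 ^ u)⁻¹ * √π := by
  have h := Gamma_mul_Gamma_add_half ((u + 1) / 2)
  rwa [show (u + 1) / 2 + 1 / 2 = u / 2 + 1 by ring, show 2 * ((u + 1) / 2) = u + 1 by ring,
    show 1 - (u + 1) = -u by ring, rpow_neg zero_le_two] at h

theorem zeta_mahler_two_general (s t : ℝ) (hs : -1 < s) (ht : -1 < t) :
    ∫ θ in (0:ℝ)..1, |2 * Real.sin (π * θ)| ^ s * |2 * Real.cos (π * θ)| ^ t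
      = Real.Gamma (s + 1) * Real.Gamma (t + 1) /
        (Real.Gamma (s / 2 + 1) * Real.Gamma (t / 2 + 1) * Real.Gamma ((s + t) / 2 + 1)) := by
  have hsymm (θ : ℝ) : |2 * sin (π * (1 - θ))| ^ s * |2 * cos (π * (1 - θ))| ^ t
      = |2 * sin (π * θ)| ^ s * |2 * cos (π * θ)| ^ t := by
    rw [mul_one_sub, sin_pi_sub, cos_pi_sub, mul_neg, abs_neg]
  rw [integral_eq_two_smul_integral_half_of_symm hsymm
      (intervalIntegrable_abs_two_sin_pi_mul_rpow_mul_abs_two_cos_pi_mul_rpow hs ht),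
    integral_abs_two_sin_pi_mul_rpow_mul_abs_two_cos_pi_mul_rpow,
    integral_sin_rpow_mul_cos_rpow hs ht, smul_eq_mul]
  have hs' : 0 < Gamma (s / 2 + 1) := Gamma_pos_of_pos (by linarith)
  have ht' : 0 < Gamma (t / 2 + 1) := Gamma_pos_of_pos (by linarith)
  rw [eq_div_of_mul_eq hs'.ne' (Gamma_add_one_div_two_mul_Gamma_div_two_add_one s),
    eq_div_of_mul_eq ht'.ne' (Gamma_add_one_div_two_mul_Gamma_div_two_add_one t),
    rpow_add two_pos]
  field_simp
  rw [sq_sqrt pi_pos.le]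
  ring

theorem zeta_mahler_two (s t : ℝ) (hs : -1 < s) (ht : -1 < t) (hst : -1 < s + t) :
    ∫ θ in (0:ℝ)..1, |2 * Real.sin (π * θ)| ^ s * |2 * Real.cos (π * θ)| ^ t
      = Real.Gamma (s + 1) * Real.Gamma (t + 1) /
        (Real.Gamma (s / 2 + 1) * Real.Gamma (t / 2 + 1) * Real.Gamma ((s + t) / 2 + 1)) :=
  zeta_mahler_two_general s t hs ht
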